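/- Let N ≥ 2 be an integer and λ a real number. Define the function P(t, λ) = (1/(2√(2π))) · e^{-(λ²/2)(1 + t/(1+t))} · t^{(N−3)/2} / (1+t)^{(N+1)/2} · ∑_{k=0}^{N−1} (λ^{2k}/k!) · [(N−1−k) + k/(1+t)] for t > 0. Then ∫_0^∞ P(t, λ) dt = (1/(√(2π)(N−2)!)) · [Γ(N−1, λ²) + |λ|^{N−1} e^{-λ²/2} ∫_0^{|λ|} e^{-u²/2} u^{N−2} du]. -/

import Mathlib

open MeasureTheory Real Filter

noncomputable def iGamma (N : ℕ) (a : ℝ) : ℝ := ∫ u in Set.Ioi a, Real.exp (-u) * u ^ (N - 1)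

/-! Substituting `t = s / (1 - s)` turns the integral into `e^{-λ²/2} / (2√(2π))` times the
integral over `(0, 1)` of `e^{-λ² s/2} s^{(N-3)/2}` times `(N - 1 - λ² s) E + λ^{2(N-1)} / (N-2)!`, where `E` is the
partial sum `∑_{k < N-1} λ^{2k} / k!` of `e^{λ²}`. The first part is the exact derivative of
`2 e^{-λ² s/2} s^{(N-1)/2} E`, and `Γ(N-1, λ²) = (N-2)! e^{-λ²} E`, since
`d/du (e^{-u} ∑_{j ≤ n} u^j / j!) = -e^{-u} u^n / n!`. The second part becomes the Gaussian
integral over `(0, |λ|)` after `s = u² / λ²`. -/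

open Set Topology
open scoped Nat

theorem hasDerivAt_sum_range_pow_div_factorial (n : ℕ) (x : ℝ) :
    HasDerivAt (fun u : ℝ => ∑ j ∈ Finset.range (n + 1), u ^ j / j !)
      (∑ j ∈ Finset.range n, x ^ j / j !) x := by
  induction n with
  | zero => simpa using hasDerivAt_const x (1 : ℝ)
  | succ n ih =>
    simp only [Finset.sum_range_succ _ (n + 1)]
    refine (ih.add ((hasDerivAt_pow (n + 1) x).div_const ((n + 1) ! : ℝ))).congr_deriv ?_
    rw [Finset.sum_range_succ, Nat.factorial_succ]
    push_cast
    field_simp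

theorem integral_Ioi_exp_neg_mul_pow (n : ℕ) {a : ℝ} (ha : 0 ≤ a) :
    ∫ u in Ioi a, exp (-u) * u ^ n =
      n ! * exp (-a) * ∑ j ∈ Finset.range (n + 1), a ^ j / j ! := by
  set E : ℝ → ℝ := fun u => ∑ j ∈ Finset.range (n + 1), u ^ j / (j ! : ℝ)
  have hderiv : ∀ x ∈ Ici a, HasDerivAt (fun u => -(n ! * (exp (-u) * E u)))
      (exp (-x) * x ^ n) x := by
    intro x _
    refine (((hasDerivAt_neg x).exp.mul
      (hasDerivAt_sum_range_pow_div_factorial n x)).const_mul (n ! : ℝ)).neg.congr_deriv ?_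
    rw [Finset.sum_range_succ _ n]
    field_simp
    ring
  have hlim : Tendsto (fun u => -(n ! * (exp (-u) * E u))) atTop (𝓝 0) := by
    have hterm (j : ℕ) : Tendsto (fun u : ℝ => exp (-u) * (u ^ j / j !)) atTop (𝓝 0) := by
      simpa [div_mul_eq_mul_div, mul_comm] using
        (tendsto_pow_mul_exp_neg_atTop_nhds_zero j).div_const (j ! : ℝ)
    simpa [E, Finset.mul_sum] using
      ((tendsto_finsetSum (Finset.range (n + 1)) fun j _ => hterm j).const_mul (n ! : ℝ)).neg
  rw [integral_Ioi_of_hasDerivAt_of_nonneg' hderiv (fun x hx => by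
    have : 0 ≤ x := ha.trans hx.le; positivity) hlim]
  simp [E, mul_assoc]

theorem iGamma_succ (n : ℕ) {a : ℝ} (ha : 0 ≤ a) :
    iGamma (n + 1) a = n ! * exp (-a) * ∑ j ∈ Finset.range (n + 1), a ^ j / j ! :=
  integral_Ioi_exp_neg_mul_pow n ha

theorem sum_range_natCast_mul_pow_div_factorial (n : ℕ) (x : ℝ) :
    ∑ k ∈ Finset.range (n + 1), (k : ℝ) * (x ^ k / k !) =
      x * ∑ k ∈ Finset.range n, x ^ k / k ! := by
  rw [Finset.sum_range_succ', Finset.mul_sum]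
  refine (add_eq_left.mpr (by simp)).trans (Finset.sum_congr rfl fun k _ => ?_)
  rw [Nat.factorial_succ]
  push_cast
  field_simp
  ring

theorem sum_range_pow_div_factorial_mul_affine (n : ℕ) (x s : ℝ) :
    ∑ k ∈ Finset.range (n + 2), x ^ k / k ! * (((n : ℝ) + 1 - k) + k * (1 - s)) =
      ((n : ℝ) + 1 - x * s) * ∑ k ∈ Finset.range (n + 1), x ^ k / k ! +
        x ^ (n + 1) / n ! := by
  have hsplit : ∀ k ∈ Finset.range (n + 2), x ^ k / k ! * (((n : ℝ) + 1 - k) + k * (1 - s)) =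
      ((n : ℝ) + 1) * (x ^ k / k !) - s * (k * (x ^ k / k !)) := fun k _ => by ring
  rw [Finset.sum_congr rfl hsplit, Finset.sum_sub_distrib, ← Finset.mul_sum, ← Finset.mul_sum,
    sum_range_natCast_mul_pow_div_factorial, Finset.sum_range_succ _ (n + 1),
    Nat.factorial_succ]
  push_cast
  field_simp
  ring

theorem integrableOn_exp_neg_mul_mul_rpow_Ioo (c : ℝ) {r : ℝ} (hr : -1 < r) :
    IntegrableOn (fun s => exp (-(c * s)) * s ^ r) (Ioo 0 1) := by
  have hrpow : IntegrableOn (fun s : ℝ => s ^ r) (Ioo 0 1) := by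
    rw [← intervalIntegrable_iff_integrableOn_Ioo_of_le zero_le_one]
    exact intervalIntegral.intervalIntegrable_rpow' hr
  exact hrpow.continuousOn_mul_of_subset (by fun_prop) isCompact_Icc measurableSet_Ioo
    Ioo_subset_Icc_self

theorem integrableOn_exp_neg_mul_mul_rpow_mul_sub (c : ℝ) {p : ℝ} (hp : 0 < p) :
    IntegrableOn (fun s => exp (-(c * s)) * s ^ (p - 1) * (p - c * s)) (Ioo 0 1) := by
  refine IntegrableOn.congr_fun
    (((integrableOn_exp_neg_mul_mul_rpow_Ioo c (r := p - 1) (by linarith)).mul_const p).sub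
      ((integrableOn_exp_neg_mul_mul_rpow_Ioo c (r := p) (by linarith)).mul_const c))
    (fun s hs => ?_) measurableSet_Ioo
  have hpow : s ^ p = s ^ (p - 1) * s := by rw [← rpow_add_one hs.1.ne', sub_add_cancel]
  simp only [Pi.sub_apply, hpow]
  ring

theorem integral_exp_neg_mul_mul_rpow_mul_sub (c : ℝ) {p : ℝ} (hp : 0 < p) :
    ∫ s in Ioo 0 1, exp (-(c * s)) * s ^ (p - 1) * (p - c * s) = exp (-c) := by
  have hderiv : ∀ s ∈ Ioo (0 : ℝ) 1, HasDerivWithinAt (fun s => exp (-(c * s)) * s ^ p)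
      (exp (-(c * s)) * s ^ (p - 1) * (p - c * s)) (Ioi s) s := by
    intro s hs
    refine (((hasDerivAt_id' s).const_mul c).fun_neg.exp.mul
      (hasDerivAt_rpow_const (Or.inl hs.1.ne'))).hasDerivWithinAt.congr_deriv ?_
    have hpow : s ^ p = s ^ (p - 1) * s := by rw [← rpow_add_one hs.1.ne', sub_add_cancel]
    rw [hpow]
    ring
  have hcont : ContinuousOn (fun s : ℝ => exp (-(c * s)) * s ^ p) (Icc 0 1) :=
    (by fun_prop : Continuous fun s : ℝ => exp (-(c * s))).continuousOn.mul
      (continuousOn_id.rpow_const fun _ _ => Or.inr hp.le)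
  have hftc := intervalIntegral.integral_eq_sub_of_hasDeriv_right_of_le zero_le_one hcont hderiv
    ((intervalIntegrable_iff_integrableOn_Ioo_of_le zero_le_one).mpr
      (integrableOn_exp_neg_mul_mul_rpow_mul_sub c hp))
  rw [intervalIntegral.integral_of_le zero_le_one, integral_Ioc_eq_integral_Ioo] at hftc
  rw [hftc, zero_rpow hp.ne']
  simp

theorem integral_Ioi_eq_integral_Ioo_div_one_sub {E : Type*} [NormedAddCommGroup E]
    [NormedSpace ℝ E] (f : ℝ → E) :
    ∫ t in Ioi 0, f t = ∫ s in Ioo 0 1, ((1 - s) ^ 2)⁻¹ • f (s / (1 - s)) := by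
  have himage : (fun s : ℝ => s / (1 - s)) '' Ioo 0 1 = Ioi 0 := by
    ext t
    refine ⟨fun ⟨s, hs, hst⟩ => hst ▸ div_pos hs.1 (by linarith [hs.2]), fun ht => ?_⟩
    have ht : 0 < t := ht
    refine ⟨t / (1 + t), ⟨by positivity, (div_lt_one (by positivity)).mpr (by linarith)⟩,
      ?_⟩
    field_simp
    ring
  have hderiv : ∀ s ∈ Ioo (0 : ℝ) 1,
      HasDerivWithinAt (fun s => s / (1 - s)) ((1 - s) ^ 2)⁻¹ (Ioo 0 1) s := by
    intro s hs
    have hs1 : 1 - s ≠ 0 := by linarith [hs.2]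
    refine ((hasDerivAt_id s).div ((hasDerivAt_id s).const_sub 1) hs1).hasDerivWithinAt.congr_deriv
      ?_
    field_simp
    simp [hs1]
  have hinj : InjOn (fun s : ℝ => s / (1 - s)) (Ioo 0 1) := by
    intro a ha b hb hab
    have ha1 : 1 - a ≠ 0 := by linarith [ha.2]
    have hb1 : 1 - b ≠ 0 := by linarith [hb.2]
    field_simp at hab
    linarith
  rw [← himage, integral_image_eq_integral_abs_deriv_smul measurableSet_Ioo hderiv hinj]
  simp_rw [abs_inv, abs_sq]

theorem integral_Ioo_zero_one_eq_integral_sq {E : Type*} [NormedAddCommGroup E]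
    [NormedSpace ℝ E] (f : ℝ → E) :
    ∫ s in Ioo 0 1, f s = ∫ v in Ioo 0 1, (2 * v) • f (v ^ 2) := by
  have himage : (fun v : ℝ => v ^ 2) '' Ioo 0 1 = Ioo 0 1 := by
    ext s
    refine ⟨fun ⟨v, hv, hvs⟩ => hvs ▸ ⟨by nlinarith [hv.1], by nlinarith [hv.1, hv.2]⟩,
      fun hs => ⟨√s, ⟨sqrt_pos.mpr hs.1, (sqrt_lt' one_pos).mpr (by simpa using hs.2)⟩,
        sq_sqrt hs.1.le⟩⟩
  have hinj : InjOn (fun v : ℝ => v ^ 2) (Ioo 0 1) := fun a ha b hb hab =>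
    (pow_left_inj₀ ha.1.le hb.1.le two_ne_zero).mp hab
  conv_lhs => rw [← himage]
  rw [integral_image_eq_integral_abs_deriv_smul measurableSet_Ioo
    (fun v _ => (hasDerivAt_pow 2 v).hasDerivWithinAt) hinj]
  refine setIntegral_congr_fun measurableSet_Ioo fun v hv => ?_
  simp [abs_of_pos hv.1]

theorem intervalIntegral_exp_neg_sq_div_two_mul_pow (n : ℕ) (b : ℝ) :
    ∫ u in 0..b, exp (-u ^ 2 / 2) * u ^ n =
      b ^ (n + 1) / 2 * ∫ s in Ioo 0 1, exp (-(b ^ 2 / 2 * s)) * s ^ (((n : ℝ) - 1) / 2) := by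
  have hsq : ∀ v ∈ Ioo (0 : ℝ) 1,
      (2 * v) • (exp (-(b ^ 2 / 2 * v ^ 2)) * (v ^ 2) ^ (((n : ℝ) - 1) / 2)) =
        2 * (exp (-(b * v) ^ 2 / 2) * v ^ n) := by
    intro v hv
    have hpow : v ^ n = v * v ^ ((n : ℝ) - 1) := by
      rw [rpow_sub_one hv.1.ne', rpow_natCast, mul_div_cancel₀ _ hv.1.ne']
    have hrpow : (v ^ 2) ^ (((n : ℝ) - 1) / 2) = v ^ ((n : ℝ) - 1) := by
      rw [← rpow_natCast v 2, ← rpow_mul hv.1.le]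
      ring_nf
    rw [hrpow, smul_eq_mul, hpow, show -(b * v) ^ 2 / 2 = -(b ^ 2 / 2 * v ^ 2) by ring]
    ring
  calc ∫ u in 0..b, exp (-u ^ 2 / 2) * u ^ n
      = b • ∫ v in 0..1, exp (-(b * v) ^ 2 / 2) * (b * v) ^ n := by
        simpa using (intervalIntegral.smul_integral_comp_mul_left (a := 0) (b := 1)
          (fun u => exp (-u ^ 2 / 2) * u ^ n) b).symm
    _ = b ^ (n + 1) * ∫ v in Ioo 0 1, exp (-(b * v) ^ 2 / 2) * v ^ n := by
        have hscale : ∫ v in Ioo 0 1, exp (-(b * v) ^ 2 / 2) * (b * v) ^ n =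
            b ^ n * ∫ v in Ioo 0 1, exp (-(b * v) ^ 2 / 2) * v ^ n := by
          rw [← integral_const_mul]
          exact setIntegral_congr_fun measurableSet_Ioo fun v _ => by ring
        rw [intervalIntegral.integral_of_le zero_le_one, integral_Ioc_eq_integral_Ioo, smul_eq_mul,
          hscale]
        ring
    _ = b ^ (n + 1) / 2 * ∫ v in Ioo 0 1,
          (2 * v) • (exp (-(b ^ 2 / 2 * v ^ 2)) * (v ^ 2) ^ (((n : ℝ) - 1) / 2)) := by
        rw [setIntegral_congr_fun measurableSet_Ioo hsq, integral_const_mul]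
        ring
    _ = _ := congrArg _ (integral_Ioo_zero_one_eq_integral_sq
          (fun s => exp (-(b ^ 2 / 2 * s)) * s ^ (((n : ℝ) - 1) / 2))).symm

/-- The density `P(t, λ)`, with `l` for `λ`. -/
noncomputable def overlapDensity (N : ℕ) (l t : ℝ) : ℝ :=
  1 / (2 * √(2 * π)) * exp (-(l ^ 2 / 2) * (1 + t / (1 + t))) *
    (t ^ (((N : ℝ) - 3) / 2) / (1 + t) ^ (((N : ℝ) + 1) / 2)) *
    ∑ k ∈ Finset.range N, l ^ (2 * k) / k ! * (((N : ℝ) - 1 - k) + (k : ℝ) / (1 + t))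

theorem inv_one_sub_sq_mul_overlapDensity_div_one_sub (n : ℕ) (l : ℝ) {s : ℝ}
    (hs : s ∈ Ioo 0 1) :
    ((1 - s) ^ 2)⁻¹ * overlapDensity (n + 2) l (s / (1 - s)) =
      exp (-(l ^ 2 / 2)) / (2 * √(2 * π)) *
        (exp (-(l ^ 2 / 2 * s)) * s ^ (((n : ℝ) - 1) / 2) *
          (((n : ℝ) + 1 - l ^ 2 * s) * ∑ k ∈ Finset.range (n + 1), (l ^ 2) ^ k / k ! +
            (l ^ 2) ^ (n + 1) / n !)) := by
  obtain ⟨hs0, hs1⟩ := hs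
  have hs1' : 0 < 1 - s := by linarith
  have hinv : 1 + s / (1 - s) = (1 - s)⁻¹ := by field_simp; ring
  have hfrac : s / (1 - s) / (1 + s / (1 - s)) = s := by
    rw [hinv, div_inv_eq_mul, div_mul_cancel₀ _ hs1'.ne']
  have hpow : (s / (1 - s)) ^ (((n : ℝ) - 1) / 2) / (1 + s / (1 - s)) ^ (((n : ℝ) + 3) / 2) =
      s ^ (((n : ℝ) - 1) / 2) * (1 - s) ^ 2 := by
    rw [hinv, div_rpow hs0.le hs1'.le, inv_rpow hs1'.le, div_inv_eq_mul, div_mul_eq_mul_div,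
      mul_div_assoc, ← rpow_sub hs1',
      show ((n : ℝ) + 3) / 2 - ((n : ℝ) - 1) / 2 = (2 : ℕ) by push_cast; ring, rpow_natCast]
  have hsum := sum_range_pow_div_factorial_mul_affine n (l ^ 2) s
  simp only [overlapDensity, hfrac]
  push_cast
  rw [show ((n : ℝ) + 2 - 3) / 2 = ((n : ℝ) - 1) / 2 by ring,
    show ((n : ℝ) + 2 + 1) / 2 = ((n : ℝ) + 3) / 2 by ring, hpow, ← hsum, hinv]
  simp only [pow_mul, show ∀ k : ℕ, (n : ℝ) + 2 - 1 - k = n + 1 - k from fun k => by ring,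
    div_inv_eq_mul, show -(l ^ 2 / 2) * (1 + s) = -(l ^ 2 / 2) + -(l ^ 2 / 2 * s) by ring,
    exp_add]
  field_simp

theorem integral_overlapDensity (n : ℕ) (l : ℝ) :
    ∫ t in Ioi 0, overlapDensity (n + 2) l t =
      exp (-(l ^ 2 / 2)) / (2 * √(2 * π)) *
        (2 * exp (-(l ^ 2 / 2)) * ∑ k ∈ Finset.range (n + 1), (l ^ 2) ^ k / k ! +
          (l ^ 2) ^ (n + 1) / n ! *
            ∫ s in Ioo 0 1, exp (-(l ^ 2 / 2 * s)) * s ^ (((n : ℝ) - 1) / 2)) := by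
  rw [integral_Ioi_eq_integral_Ioo_div_one_sub, setIntegral_congr_fun measurableSet_Ioo
    fun s hs => (smul_eq_mul _ _).trans (inv_one_sub_sq_mul_overlapDensity_div_one_sub n l hs),
    integral_const_mul]
  set S := ∑ k ∈ Finset.range (n + 1), (l ^ 2) ^ k / (k ! : ℝ)
  set c := (l ^ 2) ^ (n + 1) / (n ! : ℝ)
  have hp : (0 : ℝ) < ((n : ℝ) + 1) / 2 := by positivity
  have hsplit : ∀ s : ℝ, exp (-(l ^ 2 / 2 * s)) * s ^ (((n : ℝ) - 1) / 2) *
      (((n : ℝ) + 1 - l ^ 2 * s) * S + c) =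
      2 * S * (exp (-(l ^ 2 / 2 * s)) * s ^ (((n : ℝ) + 1) / 2 - 1) *
        (((n : ℝ) + 1) / 2 - l ^ 2 / 2 * s)) +
      c * (exp (-(l ^ 2 / 2 * s)) * s ^ (((n : ℝ) - 1) / 2)) := fun s => by
    rw [show ((n : ℝ) + 1) / 2 - 1 = ((n : ℝ) - 1) / 2 by ring]
    ring
  simp_rw [hsplit]
  rw [integral_add ((integrableOn_exp_neg_mul_mul_rpow_mul_sub _ hp).const_mul _)
      ((integrableOn_exp_neg_mul_mul_rpow_Ioo _ (by linarith)).const_mul _),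
    integral_const_mul, integral_const_mul, integral_exp_neg_mul_mul_rpow_mul_sub _ hp]
  ring

theorem stmt5 (N : ℕ) (hN : 2 ≤ N) (l : ℝ) :
    (∫ t in Set.Ioi (0 : ℝ),
      (1 / (2 * Real.sqrt (2 * π))) * Real.exp (-(l ^ 2 / 2) * (1 + t / (1 + t))) *
        (t ^ (((N : ℝ) - 3) / 2) / (1 + t) ^ (((N : ℝ) + 1) / 2)) *
        ∑ k ∈ Finset.range N,
          l ^ (2 * k) / (Nat.factorial k) * (((N : ℝ) - 1 - k) + (k : ℝ) / (1 + t)))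
    = (1 / (Real.sqrt (2 * π) * Nat.factorial (N - 2))) *
        (iGamma (N - 1) (l ^ 2) +
          |l| ^ (N - 1) * Real.exp (-l ^ 2 / 2) *
            ∫ u in (0 : ℝ)..|l|, Real.exp (-u ^ 2 / 2) * u ^ (N - 2)) := by
  obtain ⟨n, rfl⟩ : ∃ n, N = n + 2 := ⟨N - 2, by omega⟩
  rw [show n + 2 - 1 = n + 1 from rfl, Nat.add_sub_cancel, iGamma_succ n (sq_nonneg l),
    intervalIntegral_exp_neg_sq_div_two_mul_pow, sq_abs]
  refine (integral_overlapDensity n l).trans ?_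
  set A := ∫ s in Ioo 0 1, exp (-(l ^ 2 / 2 * s)) * s ^ (((n : ℝ) - 1) / 2)
  have habs : |l| ^ (n + 1) * exp (-(l ^ 2 / 2)) * (|l| ^ (n + 1) / 2 * A) =
      exp (-(l ^ 2 / 2)) * ((l ^ 2) ^ (n + 1) * A / 2) := by
    rw [← sq_abs, ← pow_mul, pow_mul']
    ring
  have hexp : exp (-l ^ 2) = exp (-(l ^ 2 / 2)) * exp (-(l ^ 2 / 2)) := by
    rw [← exp_add]; ring_nf
  rw [neg_div, habs, hexp]
  field_simp
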